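/- Let n ≥ 1, N > n, and A > 0. Let Φ : ℝ^n × ℝ^n → ℂ be measurable with |Φ(x,y)| ≤ A (1+|x−y|)^{−N} for all x, y, and such that |Φ(x,y) − Φ(x′,y)| ≤ A |x−x′| (1+|x−y|)^{−N} whenever |x−x′| ≤ 1. For j ∈ ℤ define T_j f(x) = ∫_{ℝ^n} 2^{jn} Φ(2^j x, 2^j y) f(y) dy. Then there exists a constant C depending only on n and N such that for every locally integrable f : ℝ^n → ℂ, every pair of integers j, k with j ≤ k − 10, and every x ∈ ℝ^n with M f(x) < ∞, |E_{k+1}(T_j f)(x) − E_k (T_j f)(x)| ≤ C · A · 2^{j−k} · M f(x). -/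

import Mathlib

open MeasureTheory ENNReal

/-- The dyadic cube of generation `k ∈ ℤ` containing `x`: the product
`∏ᵢ [2^{−k} mᵢ, 2^{−k}(mᵢ+1))` with `mᵢ = ⌊2^k xᵢ⌋`. -/
def dyadicCubeZ (n : ℕ) (k : ℤ) (x : EuclideanSpace ℝ (Fin n)) :
    Set (EuclideanSpace ℝ (Fin n)) :=
  {y | ∀ i, ⌊(2 : ℝ) ^ k * x i⌋ = ⌊(2 : ℝ) ^ k * y i⌋}

/-- The dyadic expectation operator `E_k g (x) = 2^{kn} ∫_{Q_k(x)} g` (complex-valued). -/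
noncomputable def dyadicEC (n : ℕ) (k : ℤ) (g : EuclideanSpace ℝ (Fin n) → ℂ)
    (x : EuclideanSpace ℝ (Fin n)) : ℂ :=
  ((2 : ℝ) ^ (k * (n : ℤ)) : ℝ) • ∫ y in dyadicCubeZ n k x, g y

/-- The (centered) Hardy–Littlewood maximal function. -/
noncomputable def maximalFn (n : ℕ) (g : EuclideanSpace ℝ (Fin n) → ℝ)
    (x : EuclideanSpace ℝ (Fin n)) : ℝ≥0∞ :=
  ⨆ (R : ℝ) (_ : 0 < R),
    (volume (Metric.ball x R))⁻¹ * ∫⁻ y in Metric.ball x R, ENNReal.ofReal |g y|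

/-!
On the cube `Q_k(x)` the kernel `K_j(u, y) = 2^{jn} Φ(2^j u, 2^j y)` oscillates little in `u`:
the cube has diameter `≲ 2^{-k}`, so the Lipschitz bound (chained over steps of length `≤ 1`)
gives `|K_j(u, y) - K_j(v, y)| ≲ A 2^{j-k} 2^{jn} (1 + 2^j |x - y|)^{-N}` for `u, v ∈ Q_k(x)`,
where Peetre's inequality moves the centre of the decay factor from `u` to `x`.
Covering `ℝⁿ` by the balls `B(x, 2^{i-j})` bounds the integral of this majorant against `|f|`
by `C M f(x)`, so `T_j f` oscillates by at most `C A 2^{j-k} M f(x)` on `Q_k(x)`.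
Finally, the averages of a function over nested sets `Q_{k+1}(x) ⊆ Q_k(x)` differ by at most
its oscillation on the larger set.
-/

namespace dyadicCubeZ

variable {n : ℕ} {k : ℤ} {x : EuclideanSpace ℝ (Fin n)}

lemma mem_self : x ∈ dyadicCubeZ n k x := fun _ => rfl

lemma eq_preimage_pi : dyadicCubeZ n k x =
    (MeasurableEquiv.toLp 2 (Fin n → ℝ)).symm ⁻¹'
      Set.univ.pi fun i => Set.Ico (⌊(2 : ℝ) ^ k * x i⌋ / (2 : ℝ) ^ k)
        ((⌊(2 : ℝ) ^ k * x i⌋ + 1) / (2 : ℝ) ^ k) := by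
  have h2k : (0 : ℝ) < 2 ^ k := by positivity
  ext y
  simp only [Set.mem_preimage, Set.mem_univ_pi, Set.mem_Ico]
  refine forall_congr' fun i => ?_
  rw [eq_comm, Int.floor_eq_iff, div_le_iff₀' h2k, lt_div_iff₀' h2k]
  rfl

lemma measurableSet : MeasurableSet (dyadicCubeZ n k x) := by
  rw [eq_preimage_pi]
  exact (MeasurableEquiv.toLp 2 (Fin n → ℝ)).symm.measurable
    (MeasurableSet.univ_pi fun _ => measurableSet_Ico)

lemma volume_eq : volume (dyadicCubeZ n k x) = ENNReal.ofReal (((2 : ℝ) ^ k)⁻¹ ^ n) := by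
  rw [eq_preimage_pi, (EuclideanSpace.volume_preserving_symm_measurableEquiv_toLp
    (Fin n)).measure_preimage (MeasurableSet.univ_pi fun _ => measurableSet_Ico).nullMeasurableSet,
    volume_pi_pi]
  simp only [Real.volume_Ico, ← sub_div, add_sub_cancel_left, one_div, Finset.prod_const,
    Finset.card_univ, Fintype.card_fin]
  rw [ENNReal.ofReal_pow (by positivity)]

lemma volume_ne_top : volume (dyadicCubeZ n k x) ≠ ⊤ := by
  rw [volume_eq]
  exact ENNReal.ofReal_ne_top

lemma volume_ne_zero : volume (dyadicCubeZ n k x) ≠ 0 := by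
  rw [volume_eq]
  exact (ENNReal.ofReal_pos.mpr (by positivity)).ne'

lemma measureReal_eq : volume.real (dyadicCubeZ n k x) = ((2 : ℝ) ^ (k * (n : ℤ)))⁻¹ := by
  rw [measureReal_def, volume_eq, ENNReal.toReal_ofReal (by positivity), zpow_mul, zpow_natCast,
    inv_pow]

lemma succ_subset : dyadicCubeZ n (k + 1) x ⊆ dyadicCubeZ n k x := by
  have floor_eq (t : ℝ) : ⌊(2 : ℝ) ^ k * t⌋ = ⌊(2 : ℝ) ^ (k + 1) * t⌋ / (2 : ℕ) := by
    rw [← Int.floor_div_natCast, zpow_add_one₀ two_ne_zero]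
    congr 1
    push_cast
    ring
  intro y hy i
  rw [floor_eq, floor_eq, hy i]

lemma norm_sub_le_of_mem {u v : EuclideanSpace ℝ (Fin n)} (hu : u ∈ dyadicCubeZ n k x)
    (hv : v ∈ dyadicCubeZ n k x) : ‖u - v‖ ≤ n * ((2 : ℝ) ^ k)⁻¹ := by
  have h2k : (0 : ℝ) < 2 ^ k := by positivity
  have coord (i : Fin n) : ‖(u - v) i‖ ≤ ((2 : ℝ) ^ k)⁻¹ := by
    have h := Int.abs_sub_lt_one_of_floor_eq_floor ((hu i).symm.trans (hv i))
    rw [← mul_sub, abs_mul, abs_of_pos h2k] at h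
    rw [PiLp.sub_apply, Real.norm_eq_abs, ← mul_le_mul_iff_of_pos_left h2k,
      mul_inv_cancel₀ h2k.ne']
    exact h.le
  have hn : (n : ℝ) ≤ (n : ℝ) ^ 2 := by exact_mod_cast Nat.le_self_pow two_ne_zero n
  rw [EuclideanSpace.norm_eq, Real.sqrt_le_iff]
  refine ⟨by positivity, ?_⟩
  calc ∑ i, ‖(u - v) i‖ ^ 2 ≤ ∑ _i : Fin n, (((2 : ℝ) ^ k)⁻¹) ^ 2 :=
        Finset.sum_le_sum fun i _ => pow_le_pow_left₀ (norm_nonneg _) (coord i) 2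
    _ ≤ (n * ((2 : ℝ) ^ k)⁻¹) ^ 2 := by
        rw [Finset.sum_const, Finset.card_univ, Fintype.card_fin, nsmul_eq_mul, mul_pow]
        gcongr

lemma zpow_mul_norm_sub_le_of_mem {j : ℤ} {u v : EuclideanSpace ℝ (Fin n)}
    (hu : u ∈ dyadicCubeZ n k x) (hv : v ∈ dyadicCubeZ n k x) :
    (2 : ℝ) ^ j * ‖u - v‖ ≤ n * (2 : ℝ) ^ (j - k) := by
  calc (2 : ℝ) ^ j * ‖u - v‖ ≤ 2 ^ j * (n * ((2 : ℝ) ^ k)⁻¹) := by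
        gcongr
        exact norm_sub_le_of_mem hu hv
    _ = n * (2 : ℝ) ^ (j - k) := by rw [zpow_sub₀ two_ne_zero]; ring

lemma zpow_mul_norm_sub_le_of_le {j : ℤ} (hjk : j ≤ k) {u v : EuclideanSpace ℝ (Fin n)}
    (hu : u ∈ dyadicCubeZ n k x) (hv : v ∈ dyadicCubeZ n k x) : (2 : ℝ) ^ j * ‖u - v‖ ≤ n :=
  (zpow_mul_norm_sub_le_of_mem hu hv).trans
    (mul_le_of_le_one_right n.cast_nonneg (zpow_le_one_of_nonpos₀ one_le_two (by omega)))

end dyadicCubeZ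

lemma dyadicEC_eq_setAverage (n : ℕ) (k : ℤ) (g : EuclideanSpace ℝ (Fin n) → ℂ)
    (x : EuclideanSpace ℝ (Fin n)) :
    dyadicEC n k g x = ⨍ y in dyadicCubeZ n k x, g y := by
  rw [setAverage_eq, dyadicCubeZ.measureReal_eq, inv_inv, dyadicEC]

section SetAverage

variable {α E : Type*} [MeasurableSpace α] {μ : Measure α} [NormedAddCommGroup E]
  [NormedSpace ℝ E] [CompleteSpace E] {s t : Set α} {g : α → E} {L : ℝ}

lemma norm_setAverage_sub_le (hs₀ : μ s ≠ 0) (hs : μ s ≠ ⊤) (hg : IntegrableOn g s μ) {c : E}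
    (hL : ∀ u ∈ s, ‖g u - c‖ ≤ L) : ‖(⨍ u in s, g u ∂μ) - c‖ ≤ L := by
  have hμs : 0 < μ.real s := ENNReal.toReal_pos hs₀ hs
  have hint : ‖∫ u in s, (g u - c) ∂μ‖ ≤ L * μ.real s :=
    norm_setIntegral_le_of_norm_le_const hs.lt_top hL
  rw [← setAverage_const hs₀ hs c, setAverage_eq, setAverage_eq, ← smul_sub,
    ← integral_sub hg (integrableOn_const hs), norm_smul, norm_inv, Real.norm_of_nonneg hμs.le,
    inv_mul_le_iff₀ hμs, mul_comm]
  exact hint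

lemma norm_setAverage_sub_setAverage_le (hts : t ⊆ s) (ht₀ : μ t ≠ 0) (hs : μ s ≠ ⊤)
    (hg : IntegrableOn g s μ) (hL : ∀ u ∈ s, ∀ v ∈ s, ‖g u - g v‖ ≤ L) :
    ‖(⨍ u in t, g u ∂μ) - ⨍ u in s, g u ∂μ‖ ≤ L := by
  have hs₀ : μ s ≠ 0 := fun h => ht₀ (measure_mono_null hts h)
  refine norm_setAverage_sub_le ht₀ (ne_top_of_le_ne_top hs (measure_mono hts))
    (hg.mono_set hts) fun u hu => ?_
  rw [norm_sub_rev]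
  exact norm_setAverage_sub_le hs₀ hs hg fun v hv => hL v hv u (hts hu)

end SetAverage

section Kernel

variable {E F : Type*} [NormedAddCommGroup E] [NormedAddCommGroup F] {A N c D : ℝ}
  {Φ : E × E → F}

lemma one_add_norm_sub_rpow_neg_le (hN : 0 ≤ N) {a b : E} (hab : ‖a - b‖ ≤ D) (y : E) :
    (1 + ‖a - y‖) ^ (-N) ≤ (1 + D) ^ N * (1 + ‖b - y‖) ^ (-N) := by
  have hD : 0 ≤ D := (norm_nonneg _).trans hab
  have hby : 1 + ‖b - y‖ ≤ (1 + D) * (1 + ‖a - y‖) := by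
    have := norm_sub_le_norm_sub_add_norm_sub b a y
    rw [norm_sub_rev b a] at this
    nlinarith [norm_nonneg (a - y)]
  calc (1 + ‖a - y‖) ^ (-N) = (1 + D) ^ N * ((1 + D) * (1 + ‖a - y‖)) ^ (-N) := by
        rw [Real.mul_rpow (by positivity) (by positivity), ← mul_assoc,
          ← Real.rpow_add (by positivity), add_neg_cancel, Real.rpow_zero, one_mul]
    _ ≤ (1 + D) ^ N * (1 + ‖b - y‖) ^ (-N) :=
        mul_le_mul_of_nonneg_left
          (Real.rpow_le_rpow_of_nonpos (by positivity) hby (neg_nonpos.mpr hN)) (by positivity)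

variable [NormedSpace ℝ E]

-- Chain the Lipschitz bound along `m` equal steps of the segment from `a` to `b`.
lemma norm_sub_le_of_lipschitz_le_one (hN : 0 ≤ N) (hA : 0 ≤ A)
    (hLip : ∀ x x' y, ‖x - x'‖ ≤ 1 →
      ‖Φ (x, y) - Φ (x', y)‖ ≤ A * ‖x - x'‖ * (1 + ‖x - y‖) ^ (-N))
    {m : ℕ} (hm : 0 < m) {a b : E} (hab : ‖a - b‖ ≤ m) (y : E) :
    ‖Φ (a, y) - Φ (b, y)‖ ≤ (1 + m) ^ N * A * ‖a - b‖ * (1 + ‖a - y‖) ^ (-N) := by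
  have hm' : (0 : ℝ) < m := Nat.cast_pos.mpr hm
  set p : ℕ → E := fun t => AffineMap.lineMap a b ((t : ℝ) / m)
  have step (t : ℕ) : ‖p t - p (t + 1)‖ = ‖a - b‖ / m := by
    rw [← dist_eq_norm, dist_lineMap_lineMap, dist_eq_norm, dist_eq_norm, Real.norm_eq_abs]
    push_cast
    rw [← sub_div, abs_div, abs_of_pos hm']
    simp [inv_mul_eq_div]
  have near (t : ℕ) (ht : t ≤ m) : ‖p t - a‖ ≤ m := by
    rw [← dist_eq_norm, dist_lineMap_left, dist_eq_norm, Real.norm_of_nonneg (by positivity)]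
    exact (mul_le_of_le_one_left (norm_nonneg _)
      (div_le_one_of_le₀ (Nat.cast_le.mpr ht) hm'.le)).trans hab
  have term (t : ℕ) (ht : t < m) : ‖Φ (p t, y) - Φ (p (t + 1), y)‖ ≤
      (1 + m) ^ N * A * (‖a - b‖ / m) * (1 + ‖a - y‖) ^ (-N) := by
    have hstep : ‖p t - p (t + 1)‖ ≤ 1 := by
      rw [step, div_le_one hm']
      exact hab
    calc ‖Φ (p t, y) - Φ (p (t + 1), y)‖
        ≤ A * ‖p t - p (t + 1)‖ * (1 + ‖p t - y‖) ^ (-N) := hLip _ _ _ hstep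
      _ ≤ A * (‖a - b‖ / m) * ((1 + m) ^ N * (1 + ‖a - y‖) ^ (-N)) := by
        rw [step]
        gcongr
        exact one_add_norm_sub_rpow_neg_le hN (near t ht.le) y
      _ = _ := by ring
  calc ‖Φ (a, y) - Φ (b, y)‖ = ‖∑ t ∈ Finset.range m, (Φ (p t, y) - Φ (p (t + 1), y))‖ := by
        rw [Finset.sum_range_sub' (fun t => Φ (p t, y))]
        simp [p, hm'.ne']
    _ ≤ ∑ t ∈ Finset.range m, (1 + m) ^ N * A * (‖a - b‖ / m) * (1 + ‖a - y‖) ^ (-N) :=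
        (norm_sum_le _ _).trans (Finset.sum_le_sum fun t ht => term t (Finset.mem_range.mp ht))
    _ = (1 + m) ^ N * A * ‖a - b‖ * (1 + ‖a - y‖) ^ (-N) := by
        rw [Finset.sum_const, Finset.card_range, nsmul_eq_mul]
        field_simp

lemma norm_smul_sub_smul_of_nonneg {c : ℝ} (hc : 0 ≤ c) (v w : E) :
    ‖c • v - c • w‖ = c * ‖v - w‖ := by
  rw [← smul_sub, norm_smul, Real.norm_of_nonneg hc]

lemma norm_apply_smul_le (hN : 0 ≤ N) (hA : 0 ≤ A)
    (hdec : ∀ x y, ‖Φ (x, y)‖ ≤ A * (1 + ‖x - y‖) ^ (-N)) (hc : 0 < c) {u x : E}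
    (hux : c * ‖u - x‖ ≤ D) (y : E) :
    ‖Φ (c • u, c • y)‖ ≤ A * (1 + D) ^ N * (1 + c * ‖x - y‖) ^ (-N) := by
  have hscale := norm_smul_sub_smul_of_nonneg (E := E) hc.le
  calc ‖Φ (c • u, c • y)‖ ≤ A * (1 + ‖c • u - c • y‖) ^ (-N) := hdec _ _
    _ ≤ A * ((1 + D) ^ N * (1 + ‖c • x - c • y‖) ^ (-N)) := by
        gcongr
        exact one_add_norm_sub_rpow_neg_le hN (by rwa [hscale]) _
    _ = A * (1 + D) ^ N * (1 + c * ‖x - y‖) ^ (-N) := by rw [hscale, mul_assoc]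

lemma norm_apply_smul_sub_le (hN : 0 ≤ N) (hA : 0 ≤ A)
    (hLip : ∀ x x' y, ‖x - x'‖ ≤ 1 →
      ‖Φ (x, y) - Φ (x', y)‖ ≤ A * ‖x - x'‖ * (1 + ‖x - y‖) ^ (-N))
    (hc : 0 < c) {m : ℕ} (hm : 0 < m) {u v x : E} (hux : c * ‖u - x‖ ≤ m)
    (huv : c * ‖u - v‖ ≤ m) (y : E) :
    ‖Φ (c • u, c • y) - Φ (c • v, c • y)‖ ≤
      (1 + m) ^ N * (1 + m) ^ N * A * (c * ‖u - v‖) * (1 + c * ‖x - y‖) ^ (-N) := by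
  have hscale := norm_smul_sub_smul_of_nonneg (E := E) hc.le
  calc ‖Φ (c • u, c • y) - Φ (c • v, c • y)‖
      ≤ (1 + m) ^ N * A * ‖c • u - c • v‖ * (1 + ‖c • u - c • y‖) ^ (-N) :=
        norm_sub_le_of_lipschitz_le_one hN hA hLip hm (by rwa [hscale]) _
    _ ≤ (1 + m) ^ N * A * ‖c • u - c • v‖ *
          ((1 + m) ^ N * (1 + ‖c • x - c • y‖) ^ (-N)) := by
        gcongr
        exact one_add_norm_sub_rpow_neg_le hN (by rwa [hscale]) _
    _ = _ := by rw [hscale, hscale]; ring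

end Kernel

section Maximal

variable {n : ℕ} {F : Type*} [NormedAddCommGroup F]

lemma lintegral_ball_le_maximalFn (f : EuclideanSpace ℝ (Fin n) → F)
    (x : EuclideanSpace ℝ (Fin n)) {r : ℝ} (hr : 0 < r) :
    ∫⁻ z in Metric.ball x r, ‖f z‖ₑ ≤
      volume (Metric.ball x r) * maximalFn n (fun y => ‖f y‖) x := by
  have hle : (volume (Metric.ball x r))⁻¹ * ∫⁻ z in Metric.ball x r, ‖f z‖ₑ ≤
      maximalFn n (fun y => ‖f y‖) x := by
    simpa only [maximalFn, abs_norm, ofReal_norm] using le_iSup₂ (f := fun R (_ : 0 < R) =>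
      (volume (Metric.ball x R))⁻¹ * ∫⁻ y in Metric.ball x R, ENNReal.ofReal |‖f y‖|) r hr
  calc ∫⁻ z in Metric.ball x r, ‖f z‖ₑ
      = volume (Metric.ball x r) *
          ((volume (Metric.ball x r))⁻¹ * ∫⁻ z in Metric.ball x r, ‖f z‖ₑ) :=
        (ENNReal.mul_inv_cancel_left (Metric.measure_ball_pos volume x hr).ne'
          measure_ball_lt_top.ne).symm
    _ ≤ _ := by gcongr

-- `2^N ∑ᵢ 2^{(n-N)i} |B(0, 1)|`, from covering `ℝⁿ` by the balls `B(x, 2ⁱ/c)`, `i ∈ ℕ`.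
noncomputable def maximalDecayConst (n : ℕ) (N : ℝ) : ℝ :=
  2 ^ N / (1 - 2 ^ ((n : ℝ) - N)) * volume.real (Metric.ball (0 : EuclideanSpace ℝ (Fin n)) 1)

lemma maximalDecayConst_pos {N : ℝ} (hN : (n : ℝ) < N) : 0 < maximalDecayConst n N := by
  have hr : 0 < 1 - (2 : ℝ) ^ ((n : ℝ) - N) :=
    sub_pos.mpr (Real.rpow_lt_one_of_one_lt_of_neg one_lt_two (by linarith))
  have hV : 0 < volume.real (Metric.ball (0 : EuclideanSpace ℝ (Fin n)) 1) :=
    ENNReal.toReal_pos (Metric.measure_ball_pos volume _ one_pos).ne' measure_ball_lt_top.ne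
  exact mul_pos (div_pos (by positivity) hr) hV

lemma lintegral_decay_mul_le_maximalFn {N : ℝ} (hN : (n : ℝ) < N)
    {f : EuclideanSpace ℝ (Fin n) → F} (hf : AEStronglyMeasurable f volume)
    (x : EuclideanSpace ℝ (Fin n)) {c : ℝ} (hc : 0 < c) :
    ∫⁻ z, ENNReal.ofReal (c ^ n * (1 + c * ‖x - z‖) ^ (-N)) * ‖f z‖ₑ ≤
      ENNReal.ofReal (maximalDecayConst n N) * maximalFn n (fun y => ‖f y‖) x := by
  set M := maximalFn n (fun y => ‖f y‖) x
  set V := volume (Metric.ball (0 : EuclideanSpace ℝ (Fin n)) 1)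
  set r : ℝ := 2 ^ ((n : ℝ) - N)
  set a : ℕ → ℝ := fun i => c ^ n * (2 ^ N * ((2 : ℝ) ^ (-N)) ^ i)
  set B : ℕ → Set (EuclideanSpace ℝ (Fin n)) := fun i => Metric.ball x (2 ^ i / c)
  have hr0 : 0 ≤ r := by positivity
  have hr1 : r < 1 := Real.rpow_lt_one_of_one_lt_of_neg one_lt_two (by linarith)
  have hV : V ≠ ⊤ := measure_ball_lt_top.ne
  -- `z` lies in the ball `B (m + 1)` for the `m` with `2 ^ m ≤ 1 + c |x - z| < 2 ^ (m + 1)`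
  have pointwise (z : EuclideanSpace ℝ (Fin n)) :
      ENNReal.ofReal (c ^ n * (1 + c * ‖x - z‖) ^ (-N)) ≤
        ∑' i, (B i).indicator (fun _ => ENNReal.ofReal (a i)) z := by
    obtain ⟨m, hm, hm'⟩ := exists_nat_pow_near (le_add_of_nonneg_right (by positivity :
      0 ≤ c * ‖x - z‖)) one_lt_two
    have hz : z ∈ B (m + 1) := by
      rw [Metric.mem_ball, dist_comm, dist_eq_norm, lt_div_iff₀ hc, mul_comm]
      linarith
    refine le_trans ?_ (ENNReal.le_tsum (m + 1))
    rw [Set.indicator_of_mem hz]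
    refine ENNReal.ofReal_le_ofReal (mul_le_mul_of_nonneg_left ?_ (by positivity))
    calc (1 + c * ‖x - z‖) ^ (-N) ≤ ((2 : ℝ) ^ m) ^ (-N) :=
          Real.rpow_le_rpow_of_nonpos (by positivity) hm (by linarith)
      _ = 2 ^ N * ((2 : ℝ) ^ (-N)) ^ (m + 1) := by
          rw [← Real.rpow_natCast_mul zero_le_two, mul_comm, Real.rpow_mul_natCast zero_le_two,
            pow_succ', ← mul_assoc, ← Real.rpow_add two_pos, add_neg_cancel, Real.rpow_zero,
            one_mul]
  have ball_term (i : ℕ) :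
      ENNReal.ofReal (a i) * volume (B i) = ENNReal.ofReal (2 ^ N * r ^ i) * V := by
    have hri : (2 : ℝ) ^ (-N) * 2 ^ n = r := by
      rw [← Real.rpow_natCast, ← Real.rpow_add two_pos, neg_add_eq_sub]
    rw [Measure.addHaar_ball_of_pos _ _ (by positivity), finrank_euclideanSpace_fin, ← mul_assoc,
      ← ENNReal.ofReal_mul (by positivity), ← hri]
    congr 2
    simp only [a, div_pow, mul_pow, ← pow_mul]
    field_simp
    ring
  calc ∫⁻ z, ENNReal.ofReal (c ^ n * (1 + c * ‖x - z‖) ^ (-N)) * ‖f z‖ₑ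
      ≤ ∫⁻ z, ∑' i, (B i).indicator (fun _ => ENNReal.ofReal (a i)) z * ‖f z‖ₑ := by
        simp_rw [ENNReal.tsum_mul_right]
        exact lintegral_mono fun z => mul_le_mul_left (pointwise z) _
    _ = ∑' i, ENNReal.ofReal (a i) * ∫⁻ z in B i, ‖f z‖ₑ := by
        rw [lintegral_tsum (f := fun i z => (B i).indicator (fun _ => ENNReal.ofReal (a i)) z *
          ‖f z‖ₑ) fun i => (aemeasurable_const.indicator measurableSet_ball).mul hf.enorm]
        refine tsum_congr fun i => ?_
        rw [← lintegral_const_mul' _ _ ENNReal.ofReal_ne_top,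
          ← lintegral_indicator measurableSet_ball]
        simp only [B, Set.indicator_mul_left]
    _ ≤ ∑' i, ENNReal.ofReal (a i) * (volume (B i) * M) :=
        ENNReal.tsum_le_tsum fun i => by
          gcongr
          exact lintegral_ball_le_maximalFn f x (by positivity)
    _ = (∑' i, ENNReal.ofReal (2 ^ N * r ^ i)) * V * M := by
        simp_rw [← mul_assoc, ball_term, ENNReal.tsum_mul_right]
    _ = ENNReal.ofReal (maximalDecayConst n N) * M := by
        rw [← ENNReal.ofReal_tsum_of_nonneg (fun i => by positivity)
            ((summable_geometric_of_lt_one hr0 hr1).mul_left _),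
          tsum_mul_left, tsum_geometric_of_lt_one hr0 hr1, ← ENNReal.ofReal_toReal hV,
          ← ENNReal.ofReal_mul (by have := sub_pos.mpr hr1; positivity)]
        rfl

end Maximal

section DecayingKernel

variable {n : ℕ} {N c B : ℝ} {g f : EuclideanSpace ℝ (Fin n) → ℂ}
  {x : EuclideanSpace ℝ (Fin n)}

lemma lintegral_enorm_mul_le_of_decay (hN : (n : ℝ) < N) (hc : 0 < c)
    (hf : AEStronglyMeasurable f volume)
    (hg : ∀ y, ‖g y‖ ≤ B * (c ^ n * (1 + c * ‖x - y‖) ^ (-N))) :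
    ∫⁻ y, ‖g y * f y‖ₑ ≤
      ENNReal.ofReal (B * maximalDecayConst n N) * maximalFn n (fun y => ‖f y‖) x := by
  have hB : 0 ≤ B := nonneg_of_mul_nonneg_left ((norm_nonneg _).trans (hg x)) (by positivity)
  calc ∫⁻ y, ‖g y * f y‖ₑ
      ≤ ∫⁻ y, ENNReal.ofReal B *
          (ENNReal.ofReal (c ^ n * (1 + c * ‖x - y‖) ^ (-N)) * ‖f y‖ₑ) := by
        refine lintegral_mono fun y => ?_
        rw [enorm_mul, ← ofReal_norm (g y), ← mul_assoc, ← ENNReal.ofReal_mul hB]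
        gcongr
        exact hg y
    _ = ENNReal.ofReal B *
          ∫⁻ y, ENNReal.ofReal (c ^ n * (1 + c * ‖x - y‖) ^ (-N)) * ‖f y‖ₑ :=
        lintegral_const_mul' _ _ ENNReal.ofReal_ne_top
    _ ≤ ENNReal.ofReal B *
          (ENNReal.ofReal (maximalDecayConst n N) * maximalFn n (fun y => ‖f y‖) x) := by
        gcongr
        exact lintegral_decay_mul_le_maximalFn hN hf x hc
    _ = _ := by rw [← mul_assoc, ← ENNReal.ofReal_mul hB]

lemma integrable_mul_of_decay (hN : (n : ℝ) < N) (hc : 0 < c)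
    (hf : AEStronglyMeasurable f volume) (hgm : AEStronglyMeasurable g volume)
    (hg : ∀ y, ‖g y‖ ≤ B * (c ^ n * (1 + c * ‖x - y‖) ^ (-N)))
    (hM : maximalFn n (fun y => ‖f y‖) x < ⊤) :
    Integrable (fun y => g y * f y) volume :=
  ⟨hgm.mul hf, (lintegral_enorm_mul_le_of_decay hN hc hf hg).trans_lt
    (ENNReal.mul_lt_top ENNReal.ofReal_lt_top hM)⟩

lemma norm_integral_mul_le_of_decay (hN : (n : ℝ) < N) (hc : 0 < c)
    (hf : AEStronglyMeasurable f volume)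
    (hg : ∀ y, ‖g y‖ ≤ B * (c ^ n * (1 + c * ‖x - y‖) ^ (-N)))
    (hM : maximalFn n (fun y => ‖f y‖) x < ⊤) :
    ‖∫ y, g y * f y‖ ≤
      B * maximalDecayConst n N * (maximalFn n (fun y => ‖f y‖) x).toReal := by
  have hB : 0 ≤ B := nonneg_of_mul_nonneg_left ((norm_nonneg _).trans (hg x)) (by positivity)
  have hP := maximalDecayConst_pos hN
  rw [← ENNReal.ofReal_le_ofReal_iff (by positivity), ENNReal.ofReal_mul (by positivity),
    ENNReal.ofReal_toReal hM.ne, ofReal_norm]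
  exact (enorm_integral_le_lintegral_enorm _).trans
    (lintegral_enorm_mul_le_of_decay hN hc hf hg)

end DecayingKernel

section RescaledKernel

variable {n : ℕ} {N A : ℝ} {Φ : EuclideanSpace ℝ (Fin n) × EuclideanSpace ℝ (Fin n) → ℂ}
  {f : EuclideanSpace ℝ (Fin n) → ℂ} {j k : ℤ} {x u v : EuclideanSpace ℝ (Fin n)}

noncomputable def rescaledKernel (n : ℕ)
    (Φ : EuclideanSpace ℝ (Fin n) × EuclideanSpace ℝ (Fin n) → ℂ) (j : ℤ)
    (u y : EuclideanSpace ℝ (Fin n)) : ℂ :=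
  (2 : ℂ) ^ (j * (n : ℤ)) * Φ ((2 : ℝ) ^ j • u, (2 : ℝ) ^ j • y)

lemma norm_two_zpow_mul_natCast (j : ℤ) (n : ℕ) :
    ‖(2 : ℂ) ^ (j * (n : ℤ))‖ = ((2 : ℝ) ^ j) ^ n := by
  rw [norm_zpow, Complex.norm_ofNat, zpow_mul, zpow_natCast]

lemma measurable_rescaledKernel (hΦ : Measurable Φ) :
    Measurable fun p : EuclideanSpace ℝ (Fin n) × EuclideanSpace ℝ (Fin n) =>
      rescaledKernel n Φ j p.1 p.2 :=
  measurable_const.mul (hΦ.comp ((measurable_fst.const_smul ((2 : ℝ) ^ j)).prodMk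
    (measurable_snd.const_smul ((2 : ℝ) ^ j))))

lemma norm_rescaledKernel_le (hN : 0 ≤ N) (hA : 0 ≤ A)
    (hdec : ∀ x y, ‖Φ (x, y)‖ ≤ A * (1 + ‖x - y‖) ^ (-N)) (hjk : j ≤ k)
    (hu : u ∈ dyadicCubeZ n k x) (y : EuclideanSpace ℝ (Fin n)) :
    ‖rescaledKernel n Φ j u y‖ ≤
      A * (1 + n) ^ N * (((2 : ℝ) ^ j) ^ n * (1 + 2 ^ j * ‖x - y‖) ^ (-N)) := by
  rw [rescaledKernel, norm_mul, norm_two_zpow_mul_natCast, mul_left_comm]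
  gcongr
  exact norm_apply_smul_le hN hA hdec (by positivity)
    (dyadicCubeZ.zpow_mul_norm_sub_le_of_le hjk hu dyadicCubeZ.mem_self) y

lemma norm_rescaledKernel_sub_le (hn : 0 < n) (hN : 0 ≤ N) (hA : 0 ≤ A)
    (hLip : ∀ x x' y, ‖x - x'‖ ≤ 1 →
      ‖Φ (x, y) - Φ (x', y)‖ ≤ A * ‖x - x'‖ * (1 + ‖x - y‖) ^ (-N))
    (hjk : j ≤ k) (hu : u ∈ dyadicCubeZ n k x) (hv : v ∈ dyadicCubeZ n k x)
    (y : EuclideanSpace ℝ (Fin n)) :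
    ‖rescaledKernel n Φ j u y - rescaledKernel n Φ j v y‖ ≤
      (1 + n) ^ N * (1 + n) ^ N * A * (n * 2 ^ (j - k)) *
        (((2 : ℝ) ^ j) ^ n * (1 + 2 ^ j * ‖x - y‖) ^ (-N)) := by
  rw [rescaledKernel, rescaledKernel, ← mul_sub, norm_mul, norm_two_zpow_mul_natCast,
    mul_left_comm]
  gcongr
  refine (norm_apply_smul_sub_le hN hA hLip (by positivity) hn
    (dyadicCubeZ.zpow_mul_norm_sub_le_of_le hjk hu dyadicCubeZ.mem_self)
    (dyadicCubeZ.zpow_mul_norm_sub_le_of_le hjk hu hv) y).trans ?_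
  gcongr _ * ?_ * _
  exact dyadicCubeZ.zpow_mul_norm_sub_le_of_mem hu hv

lemma integrableOn_dyadicCubeZ_integral_rescaledKernel_mul (hN : (n : ℝ) < N) (hA : 0 ≤ A)
    (hΦ : Measurable Φ) (hdec : ∀ x y, ‖Φ (x, y)‖ ≤ A * (1 + ‖x - y‖) ^ (-N))
    (hf : AEStronglyMeasurable f volume) (hjk : j ≤ k)
    (hM : maximalFn n (fun y => ‖f y‖) x < ⊤) :
    IntegrableOn (fun u => ∫ y, rescaledKernel n Φ j u y * f y) (dyadicCubeZ n k x) volume := by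
  refine Measure.integrableOn_of_bounded (M := A * (1 + n) ^ N * maximalDecayConst n N *
      (maximalFn n (fun y => ‖f y‖) x).toReal) dyadicCubeZ.volume_ne_top
    ((measurable_rescaledKernel hΦ).aestronglyMeasurable.mul hf.comp_snd).integral_prod_right'
    ((ae_restrict_mem dyadicCubeZ.measurableSet).mono fun u hu => ?_)
  exact norm_integral_mul_le_of_decay hN (by positivity) hf
    (norm_rescaledKernel_le ((Nat.cast_nonneg n).trans hN.le) hA hdec hjk hu) hM

lemma norm_integral_rescaledKernel_mul_sub_le (hn : 0 < n) (hN : (n : ℝ) < N) (hA : 0 ≤ A)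
    (hΦ : Measurable Φ) (hdec : ∀ x y, ‖Φ (x, y)‖ ≤ A * (1 + ‖x - y‖) ^ (-N))
    (hLip : ∀ x x' y, ‖x - x'‖ ≤ 1 →
      ‖Φ (x, y) - Φ (x', y)‖ ≤ A * ‖x - x'‖ * (1 + ‖x - y‖) ^ (-N))
    (hf : AEStronglyMeasurable f volume) (hjk : j ≤ k)
    (hM : maximalFn n (fun y => ‖f y‖) x < ⊤)
    (hu : u ∈ dyadicCubeZ n k x) (hv : v ∈ dyadicCubeZ n k x) :
    ‖(∫ y, rescaledKernel n Φ j u y * f y) - ∫ y, rescaledKernel n Φ j v y * f y‖ ≤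
      (1 + n) ^ N * (1 + n) ^ N * n * maximalDecayConst n N * A * 2 ^ (j - k) *
        (maximalFn n (fun y => ‖f y‖) x).toReal := by
  have hN0 : 0 ≤ N := (Nat.cast_nonneg n).trans hN.le
  have hKm (w : EuclideanSpace ℝ (Fin n)) :
      AEStronglyMeasurable (rescaledKernel n Φ j w) volume :=
    ((measurable_rescaledKernel hΦ).comp
      (measurable_const.prodMk measurable_id : Measurable fun y => (w, y))).aestronglyMeasurable
  rw [← integral_sub
    (integrable_mul_of_decay hN (by positivity) hf (hKm u)
      (norm_rescaledKernel_le hN0 hA hdec hjk hu) hM)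
    (integrable_mul_of_decay hN (by positivity) hf (hKm v)
      (norm_rescaledKernel_le hN0 hA hdec hjk hv) hM)]
  simp_rw [← sub_mul]
  exact (norm_integral_mul_le_of_decay hN (by positivity) hf
    (norm_rescaledKernel_sub_le hn hN0 hA hLip hjk hu hv) hM).trans_eq (by ring)

end RescaledKernel

/-- When the kernel scale is much coarser than the dyadic cube scale
(`j ≤ k − 10`), the decay `|Φ(x,y)| ≤ A(1+|x−y|)^{−N}` (`N > n`) and the Lipschitz bound
`|Φ(x,y) − Φ(x′,y)| ≤ A|x−x′|(1+|x−y|)^{−N}` for `|x−x′| ≤ 1` give the martingale-difference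
bound `|E_{k+1}(T_j f)(x) − E_k(T_j f)(x)| ≤ C A 2^{j−k} M f(x)` for locally integrable `f`
and any `x` with `M f(x) < ∞`, where `T_j f(x) = ∫ 2^{jn} Φ(2^j x, 2^j y) f(y) dy` and `C`
depends only on `n` and `N`. -/
theorem stmt9 (n : ℕ) (hn : 1 ≤ n) (N : ℝ) (hN : (n : ℝ) < N) :
    ∃ C : ℝ, 0 < C ∧
      ∀ A : ℝ, 0 < A →
        ∀ Φ : EuclideanSpace ℝ (Fin n) × EuclideanSpace ℝ (Fin n) → ℂ,
          Measurable Φ →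
          (∀ x y, ‖Φ (x, y)‖ ≤ A * (1 + ‖x - y‖) ^ (-N)) →
          (∀ x x' y, ‖x - x'‖ ≤ 1 →
            ‖Φ (x, y) - Φ (x', y)‖ ≤ A * ‖x - x'‖ * (1 + ‖x - y‖) ^ (-N)) →
          ∀ f : EuclideanSpace ℝ (Fin n) → ℂ, LocallyIntegrable f volume →
            ∀ j k : ℤ, j ≤ k - 10 →
              ∀ x, maximalFn n (fun y => ‖f y‖) x < ⊤ →
                ENNReal.ofReal
                    ‖dyadicEC n (k + 1)
                        (fun x' => ∫ y,
                          (2 : ℂ) ^ (j * (n : ℤ)) *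
                            Φ ((2 : ℝ) ^ j • x', (2 : ℝ) ^ j • y) * f y) x -
                      dyadicEC n k
                        (fun x' => ∫ y,
                          (2 : ℂ) ^ (j * (n : ℤ)) *
                            Φ ((2 : ℝ) ^ j • x', (2 : ℝ) ^ j • y) * f y) x‖ ≤
                  ENNReal.ofReal (C * A * (2 : ℝ) ^ (j - k)) *
                    maximalFn n (fun y => ‖f y‖) x := by
  have hP := maximalDecayConst_pos hN
  refine ⟨(1 + n) ^ N * (1 + n) ^ N * n * maximalDecayConst n N, by positivity, ?_⟩
  intro A hA Φ hΦ hdec hLip f hf j k hjk x hM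
  have hjk' : j ≤ k := by omega
  have key := norm_setAverage_sub_setAverage_le dyadicCubeZ.succ_subset
    dyadicCubeZ.volume_ne_zero dyadicCubeZ.volume_ne_top
    (integrableOn_dyadicCubeZ_integral_rescaledKernel_mul hN hA.le hΦ hdec
      hf.aestronglyMeasurable hjk' hM)
    fun u hu v hv => norm_integral_rescaledKernel_mul_sub_le hn hN hA.le hΦ hdec hLip
      hf.aestronglyMeasurable hjk' hM hu hv
  rw [dyadicEC_eq_setAverage, dyadicEC_eq_setAverage]
  calc _ ≤ _ := ENNReal.ofReal_le_ofReal key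
    _ = _ := by rw [ENNReal.ofReal_mul (by positivity), ENNReal.ofReal_toReal hM.ne]
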